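/- There exists a constant c > 0 and an infinite family of triangle-free graphs G_n on n vertices (for infinitely many n) with chromatic number χ(G_n) ≥ c·log(log n). -/

import Mathlib

/-!
Shift graphs already suffice, with a `log` rather than a `log log` bound. The shift graph on a
linear order `α` has the pairs `i < j` as vertices, `(i, j)` being adjacent to `(j, l)`; it is
triangle-free. In a proper colouring, let `S i` be the set of colours of the pairs `(i, _)`. For
`i < j` the colour of `(i, j)` lies in `S i` but not in `S j`, because `(i, j)` is adjacent to every
`(j, _)`; so `i ↦ S i` is injective and `t` colours force `|α| ≤ 2 ^ t`. On `2 ^ N` points the shift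
graph has at most `4 ^ N` vertices and chromatic number at least `N`.
-/

open SimpleGraph

variable {α : Type*}

def shiftGraph (α : Type*) [Preorder α] : SimpleGraph {p : α × α // p.1 < p.2} where
  Adj u v := u.1.2 = v.1.1 ∨ v.1.2 = u.1.1
  symm := ⟨fun _ _ => Or.symm⟩
  loopless := ⟨fun u h => by rcases h with h | h <;> exact u.2.ne' h⟩

theorem shiftGraph_cliqueFree_three [Preorder α] : (shiftGraph α).CliqueFree 3 := by
  classical
  intro s hs
  obtain ⟨⟨⟨a, a'⟩, ha⟩, ⟨⟨b, b'⟩, hb⟩, ⟨⟨c, c'⟩, hc⟩, hab, hac, hbc, -⟩ := is3Clique_iff.mp hs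
  simp only [shiftGraph] at ha hb hc hab hac hbc
  rcases hab with rfl | rfl <;> rcases hac with h | h <;> rcases hbc with h' | h' <;>
    subst_vars <;> order

theorem card_le_two_pow_of_colorable_shiftGraph [Fintype α] [LinearOrder α] {t : ℕ}
    (h : (shiftGraph α).Colorable t) : Fintype.card α ≤ 2 ^ t := by
  obtain ⟨C⟩ := h
  let colorsFrom (i : α) : Set (Fin t) :=
    {c | ∃ v : {p : α × α // p.1 < p.2}, v.1.1 = i ∧ C v = c}
  have colorsFrom_injective : Function.Injective colorsFrom := by
    refine Function.Injective.of_lt_imp_ne fun i j hij heq => ?_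
    obtain ⟨v, hv, hCv⟩ : C ⟨(i, j), hij⟩ ∈ colorsFrom j := heq ▸ ⟨_, rfl, rfl⟩
    exact C.valid (show (shiftGraph α).Adj _ _ from Or.inl hv.symm) hCv.symm
  simpa [Fintype.card_set] using Fintype.card_le_of_injective _ colorsFrom_injective

theorem le_chromaticNumber_shiftGraph [Fintype α] [LinearOrder α] {k : ℕ}
    (hk : 2 ^ k ≤ Fintype.card α) : (k : ℕ∞) ≤ (shiftGraph α).chromaticNumber :=
  le_chromaticNumber_iff_colorable.2 fun _ ht => by
    exact_mod_cast (Nat.pow_le_pow_iff_right one_lt_two).1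
      (hk.trans (card_le_two_pow_of_colorable_shiftGraph ht))

theorem log_log_le_of_le_four_pow {n k : ℕ} (h : n ≤ 4 ^ k) :
    Real.log (Real.log n) ≤ 2 * k := by
  rcases n.eq_zero_or_pos with rfl | hn
  · simp
  calc Real.log (Real.log n) ≤ Real.log n := Real.log_le_self (Real.log_natCast_nonneg n)
    _ ≤ Real.log (4 ^ k) := Real.log_le_log (by positivity) (by exact_mod_cast h)
    _ = k * (2 * Real.log 2) := by
      rw [Real.log_pow, show (4 : ℝ) = 2 ^ 2 by norm_num, Real.log_pow]
      push_cast
      ring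
    _ ≤ 2 * k := by nlinarith [Real.log_two_lt_d9, (Nat.cast_nonneg k : (0 : ℝ) ≤ k)]

theorem exists_triangle_free_loglog_chromatic :
    ∃ c : ℝ, 0 < c ∧ ∀ N : ℕ, ∃ n : ℕ, N ≤ n ∧
      ∃ G : SimpleGraph (Fin n),
        G.CliqueFree 3 ∧
        c * Real.log (Real.log n) ≤ (G.chromaticNumber.toNat : ℝ) := by
  refine ⟨1 / 2, one_half_pos, fun N => ?_⟩
  let H := shiftGraph (Fin (2 ^ N))
  let G := H.overFin rfl
  have hχ : (N : ℕ∞) ≤ G.chromaticNumber := by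
    rw [← chromaticNumber_congr (H.overFinIso rfl)]
    exact le_chromaticNumber_shiftGraph (by simp)
  have hχ_ne_top : G.chromaticNumber ≠ ⊤ :=
    (G.chromaticNumber_le_card.trans_lt (ENat.natCast_lt_top _)).ne
  have hcard : Fintype.card {p : Fin (2 ^ N) × Fin (2 ^ N) // p.1 < p.2} ≤ 4 ^ N :=
    (Fintype.card_subtype_le _).trans_eq (by rw [Fintype.card_prod, Fintype.card_fin, ← mul_pow]; rfl)
  refine ⟨_, ?_, G, shiftGraph_cliqueFree_three.comap (H.overFinIso rfl).isContained', ?_⟩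
  · simpa using hχ.trans G.chromaticNumber_le_card
  · have hN : (N : ℝ) ≤ G.chromaticNumber.toNat := by
      exact_mod_cast ENat.toNat_le_toNat hχ hχ_ne_top
    linarith [log_log_le_of_le_four_pow hcard]
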